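/- Let G be the subgroup of GL(4,ℝ) generated by A = [[1,0,0,0],[0,1,0,0],[0,0,1,0],[√2−1,1,0,1]] and B = [[1,0,0,0],[0,1,0,0],[0,0,1,0],[1,0,0,1]], and let u = (1,1,0,0) and v = (1,1,0,√3). Then: (i) v belongs to closure(G(u)) but not to G(u); (ii) there exists a sequence (B_m)_{m∈ℕ} in G that is unbounded (the norms ‖B_m‖ are not bounded above) and satisfies lim_{m→∞} B_m u = v. -/

import Mathlib

/-! Both generators are shears `E(a, b)` (the identity with last row `(a, b, 0, 1)`), and
`(a, b) ↦ E(a, b)` is a homomorphism from `ℝ²`. Hence `G = {E(m(√2 - 1) + n, m) : m, n ∈ ℤ}` and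
`G(u) = {(1, 1, 0, x) : x ∈ ℤ√2 + ℤ}`. Since `√2` is irrational, `ℤ√2 + ℤ` is dense in `ℝ`, while
`√3 ∉ ℤ√2 + ℤ` (square `√3 - n = m√2`). Density gives a sequence in `G` moving `u` towards `v`. It
cannot be bounded: `G` has only finitely many elements with bounded entries, so a bounded sequence
would move `u` inside a finite, hence closed, subset of `G(u)`, which would then contain `v`. -/

open Matrix Filter Topology

/-- The matrix `A = [[1,0,0,0],[0,1,0,0],[0,0,1,0],[√2−1,1,0,1]]` as an element of `GL(4, ℝ)`. -/
noncomputable def Aex : Matrix.GeneralLinearGroup (Fin 4) ℝ :=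
  Matrix.GeneralLinearGroup.mkOfDetNeZero
    !![1,0,0,0;0,1,0,0;0,0,1,0;Real.sqrt 2 - 1,1,0,1]
    (by simp [Matrix.det_succ_row_zero, Fin.sum_univ_succ])

/-- The matrix `B = [[1,0,0,0],[0,1,0,0],[0,0,1,0],[1,0,0,1]]` as an element of `GL(4, ℝ)`. -/
noncomputable def Bex : Matrix.GeneralLinearGroup (Fin 4) ℝ :=
  Matrix.GeneralLinearGroup.mkOfDetNeZero !![1,0,0,0;0,1,0,0;0,0,1,0;1,0,0,1]
    (by simp [Matrix.det_succ_row_zero, Fin.sum_univ_succ])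

/-- The subgroup of `GL(4, ℝ)` generated by `A` and `B`. -/
noncomputable def Gex : Subgroup (Matrix.GeneralLinearGroup (Fin 4) ℝ) :=
  Subgroup.closure {Aex, Bex}

def shearMatrix (a b : ℝ) : Matrix (Fin 4) (Fin 4) ℝ := !![1,0,0,0;0,1,0,0;0,0,1,0;a,b,0,1]

noncomputable def shear : Multiplicative (ℝ × ℝ) →* Matrix.GeneralLinearGroup (Fin 4) ℝ :=
  MonoidHom.toHomUnits
    { toFun := fun p => shearMatrix p.toAdd.1 p.toAdd.2
      map_one' := by
        ext i j; fin_cases i <;> fin_cases j <;> simp [shearMatrix, one_apply]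
      map_mul' := fun p q => by
        ext i j; fin_cases i <;> fin_cases j <;>
          simp [shearMatrix, mul_apply, Fin.sum_univ_succ, add_comm] }

lemma coe_shear (p : Multiplicative (ℝ × ℝ)) :
    (shear p : Matrix (Fin 4) (Fin 4) ℝ) = shearMatrix p.toAdd.1 p.toAdd.2 := rfl

lemma shear_mulVec (p : Multiplicative (ℝ × ℝ)) :
    (shear p : Matrix (Fin 4) (Fin 4) ℝ) *ᵥ ![1, 1, 0, 0] = ![1, 1, 0, p.toAdd.1 + p.toAdd.2] := by
  ext i; fin_cases i <;> simp [coe_shear, shearMatrix, mulVec, dotProduct, Fin.sum_univ_succ]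

lemma Aex_eq_shear : Aex = shear (.ofAdd (√2 - 1, 1)) := Units.ext rfl

lemma Bex_eq_shear : Bex = shear (.ofAdd (1, 0)) := Units.ext rfl

lemma Gex_eq_map_closure :
    Gex = (Subgroup.closure {.ofAdd (√2 - 1, 1), .ofAdd (1, 0)}).map shear := by
  rw [MonoidHom.map_closure, Set.image_pair, ← Aex_eq_shear, ← Bex_eq_shear, Gex]

lemma mem_Gex_iff {M : Matrix.GeneralLinearGroup (Fin 4) ℝ} :
    M ∈ Gex ↔ ∃ m n : ℤ, shear (.ofAdd (m * (√2 - 1) + n, m)) = M := by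
  simp only [Gex_eq_map_closure, Subgroup.mem_map, Subgroup.mem_closure_pair]
  constructor
  · rintro ⟨_, ⟨m, n, rfl⟩, rfl⟩
    exact ⟨m, n, congrArg shear (by ext <;> simp)⟩
  · rintro ⟨m, n, rfl⟩
    exact ⟨_, ⟨m, n, rfl⟩, congrArg shear (by ext <;> simp)⟩

lemma Gex_orbit_eq :
    {w : Fin 4 → ℝ | ∃ M ∈ Gex, (M : Matrix (Fin 4) (Fin 4) ℝ).mulVec ![1, 1, 0, 0] = w} =
      (fun x : ℝ => ![1, 1, 0, x]) '' AddSubgroup.closure {√2, 1} := by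
  have hsum (m n : ℤ) : (m : ℝ) * (√2 - 1) + n + m = m * √2 + n := by ring
  ext w
  simp only [Set.mem_ofPred_eq, Set.mem_image, SetLike.mem_coe, mem_Gex_iff,
    exists_exists_exists_and_eq, shear_mulVec, toAdd_ofAdd, hsum, AddSubgroup.mem_closure_pair,
    zsmul_eq_mul, mul_one]

lemma sqrt_three_notMem_closure_sqrt_two_one : √3 ∉ AddSubgroup.closure ({√2, 1} : Set ℝ) := by
  rw [AddSubgroup.mem_closure_pair]
  rintro ⟨m, n, h⟩
  simp only [zsmul_eq_mul, mul_one] at h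
  have hsq : 2 * (n : ℝ) * √3 = 3 + n ^ 2 - 2 * m ^ 2 := by
    have h2 : (m * √2) ^ 2 = (√3 - n) ^ 2 := by rw [← h]; ring
    rw [mul_pow, Real.sq_sqrt (by norm_num), sub_sq, Real.sq_sqrt (by norm_num)] at h2
    linear_combination h2
  rcases eq_or_ne n 0 with rfl | hn
  · have : ((3 : ℤ) : ℝ) = (2 * m ^ 2 : ℤ) := by push_cast at hsq ⊢; linarith
    have : (3 : ℤ) = 2 * m ^ 2 := by exact_mod_cast this
    omega
  · have hirr : Irrational (√3 * (2 * n : ℤ)) :=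
      Nat.prime_three.irrational_sqrt.mul_intCast (by omega)
    exact hirr.ne_int (3 + n ^ 2 - 2 * m ^ 2) (by push_cast; linear_combination hsq)

lemma finite_Gex_inter_bounded (C : ℝ) :
    {M ∈ Gex | ∀ i j, ‖(M : Matrix (Fin 4) (Fin 4) ℝ) i j‖ ≤ C}.Finite := by
  refine (((isCompact_closedBall (0 : ℤ × ℤ) (2 * C)).finite_of_discrete).image
    fun p => shear (.ofAdd ((p.1 : ℝ) * (√2 - 1) + p.2, p.1))).subset ?_
  rintro M ⟨hM, hC⟩
  obtain ⟨m, n, rfl⟩ := mem_Gex_iff.1 hM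
  refine ⟨(m, n), ?_, rfl⟩
  have h30 := hC 3 0
  have h31 := hC 3 1
  simp only [coe_shear, shearMatrix, toAdd_ofAdd, of_apply, cons_val', cons_val, cons_val_zero,
    cons_val_one, empty_val', cons_val_fin_one, Real.norm_eq_abs, abs_le] at h30 h31
  have hlo := Real.one_lt_sqrt_two
  have hhi := Real.sqrt_two_lt_three_halves
  rw [mem_closedBall_zero_iff, Prod.norm_def, max_le_iff, Int.norm_eq_abs, Int.norm_eq_abs,
    abs_le, abs_le]
  refine ⟨⟨?_, ?_⟩, ?_, ?_⟩ <;> nlinarith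

theorem not_exists_bound_of_tendsto {ι : Type*} [Fintype ι] [DecidableEq ι]
    {S : Set (Matrix.GeneralLinearGroup ι ℝ)}
    (hS : ∀ C : ℝ, {M ∈ S | ∀ i j, ‖(M : Matrix ι ι ℝ) i j‖ ≤ C}.Finite) {u v : ι → ℝ}
    (hv : v ∉ {w | ∃ M ∈ S, (M : Matrix ι ι ℝ).mulVec u = w})
    {B : ℕ → Matrix.GeneralLinearGroup ι ℝ} (hB : ∀ k, B k ∈ S)
    (hlim : Tendsto (fun k => (B k : Matrix ι ι ℝ).mulVec u) atTop (𝓝 v)) :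
    ¬ ∃ C : ℝ, ∀ k, ∀ i j, ‖(B k : Matrix ι ι ℝ) i j‖ ≤ C := by
  rintro ⟨C, hC⟩
  have hclosed := ((hS C).image fun M : Matrix.GeneralLinearGroup ι ℝ =>
    (M : Matrix ι ι ℝ).mulVec u).isClosed
  obtain ⟨M, hM, hMv⟩ :=
    hclosed.mem_of_tendsto hlim (.of_forall fun k => ⟨B k, ⟨hB k, hC k⟩, rfl⟩)
  exact hv ⟨M, hM.1, hMv⟩

lemma mem_closure_Gex_orbit : ![1, 1, 0, √3] ∈ closure {w : Fin 4 → ℝ |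
    ∃ M ∈ Gex, (M : Matrix (Fin 4) (Fin 4) ℝ).mulVec ![1, 1, 0, 0] = w} := by
  have hdense : Dense (AddSubgroup.closure {√2, 1} : Set ℝ) :=
    dense_addSubgroupClosure_pair_iff.2 (by simpa using irrational_sqrt_two)
  rw [Gex_orbit_eq]
  exact image_closure_subset_closure_image (by fun_prop) ⟨√3, hdense.closure_eq ▸ trivial, rfl⟩

lemma notMem_Gex_orbit : ![1, 1, 0, √3] ∉ {w : Fin 4 → ℝ |
    ∃ M ∈ Gex, (M : Matrix (Fin 4) (Fin 4) ℝ).mulVec ![1, 1, 0, 0] = w} := by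
  rw [Gex_orbit_eq]
  rintro ⟨x, hx, hxv⟩
  obtain rfl : x = √3 := by simpa using congrFun hxv 3
  exact sqrt_three_notMem_closure_sqrt_two_one hx

/-- Let `G` be the subgroup of `GL(4, ℝ)` generated by `A` and `B` above, `u = (1,1,0,0)` and
`v = (1,1,0,√3)`. Then (i) `v ∈ closure(G(u)) \ G(u)`; (ii) there is an unbounded sequence
`(B_m)` in `G` with `lim B_m u = v`. -/
theorem example_unbounded_sequence :
    (![1, 1, 0, Real.sqrt 3] ∈ closure {w : Fin 4 → ℝ |
        ∃ M ∈ Gex, (M : Matrix (Fin 4) (Fin 4) ℝ).mulVec ![1, 1, 0, 0] = w} ∧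
      ![1, 1, 0, Real.sqrt 3] ∉ {w : Fin 4 → ℝ |
        ∃ M ∈ Gex, (M : Matrix (Fin 4) (Fin 4) ℝ).mulVec ![1, 1, 0, 0] = w}) ∧
    ∃ B : ℕ → Matrix.GeneralLinearGroup (Fin 4) ℝ,
      (∀ m, B m ∈ Gex) ∧
      (¬ ∃ C : ℝ, ∀ m, ∀ i j : Fin 4, ‖(B m : Matrix (Fin 4) (Fin 4) ℝ) i j‖ ≤ C) ∧
      Tendsto (fun m => (B m : Matrix (Fin 4) (Fin 4) ℝ).mulVec ![1, 1, 0, 0]) atTop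
        (𝓝 ![1, 1, 0, Real.sqrt 3]) := by
  obtain ⟨w, hw, hlim⟩ := mem_closure_iff_seq_limit.1 mem_closure_Gex_orbit
  choose B hBG hBw using hw
  have hBlim : Tendsto (fun k => (B k : Matrix (Fin 4) (Fin 4) ℝ).mulVec ![1, 1, 0, 0]) atTop
      (𝓝 ![1, 1, 0, √3]) := by simpa only [hBw] using hlim
  exact ⟨⟨mem_closure_Gex_orbit, notMem_Gex_orbit⟩, B, hBG,
    not_exists_bound_of_tendsto finite_Gex_inter_bounded notMem_Gex_orbit hBG hBlim, hBlim⟩
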